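/- arXiv:1705.08859 — 5 statements merged into one kernel-verified Lean document; each statement's English description precedes it below -/
import Mathlib

section
/- Suppose a graph G with transition matrix H(t) admits pretty good state transfer from vertex u to vertex v, i.e., there is a real sequence {t_k} and a unimodular complex number γ with lim_{k→∞} H(t_k)e_u = γ e_v. If P is the permutation matrix of an automorphism of G with P e_u = e_u, then P e_v = e_v. -/
/-!
A graph automorphism commutes with the adjacency matrix, hence with every `exp (-i t A)`,
so it maps each state `H(t_k) e_u` to `H(t_k) (P e_u) = H(t_k) e_u`. Fixed points of a continuous
map form a closed set, so the limit `γ e_v` is fixed by `P` as well, and `γ ≠ 0` cancels.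
-/

open Matrix Filter

theorem Function.IsFixedPt.of_tendsto_of_commute {X ι : Type*} [TopologicalSpace X] [T2Space X]
    {l : Filter ι} [l.NeBot] {f : X → X} (hf : Continuous f) {g : ι → X → X} {x y : X}
    (hx : IsFixedPt f x) (hcomm : ∀ k, Function.Commute f (g k))
    (hg : Tendsto (fun k => g k x) l (nhds y)) : IsFixedPt f y :=
  (isClosed_fixedPoints hf).mem_of_tendsto hg (Eventually.of_forall fun k => hx.map (hcomm k).symm)

theorem SimpleGraph.Iso.commute_permMatrix_adjMatrix {V R : Type*} [Fintype V] [DecidableEq V]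
    [Semiring R] {G : SimpleGraph V} [DecidableRel G.Adj] (σ : G ≃g G) :
    Commute (Equiv.Perm.permMatrix R (σ.toEquiv : Equiv.Perm V)) (G.adjMatrix R) := by
  rw [Commute, SemiconjBy, Equiv.Perm.permMatrix, PEquiv.toMatrix_toPEquiv_mul,
    PEquiv.mul_toMatrix_toPEquiv]
  ext i j
  simp only [submatrix_apply, id_eq, SimpleGraph.adjMatrix_apply]
  have hadj : G.Adj (σ i) j ↔ G.Adj i (σ.symm j) := by
    simpa using σ.map_adj_iff (v := i) (w := σ.symm j)
  exact if_congr hadj rfl rfl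

theorem Matrix.commute_mulVec {n R : Type*} [Fintype n] [CommSemiring R] {M N : Matrix n n R}
    (h : Commute M N) : Function.Commute M.mulVec N.mulVec := fun x => by
  rw [mulVec_mulVec, h.eq, ← mulVec_mulVec]

/-- If G admits pretty good state transfer from u to v and P is the permutation matrix
of an automorphism of G fixing e_u, then P fixes e_v. -/
theorem stmt4 {V : Type*} [Fintype V] [DecidableEq V] (G : SimpleGraph V)
    [DecidableRel G.Adj] (σ : G ≃g G) (u v : V) (t : ℕ → ℝ) (γ : ℂ) (hγ : ‖γ‖ = 1)
    (hpgst : Tendsto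
      (fun k => (NormedSpace.exp ((-(t k : ℂ) * Complex.I) • G.adjMatrix ℂ)).mulVec
        (Pi.single u 1 : V → ℂ))
      atTop (nhds (γ • (Pi.single v 1 : V → ℂ))))
    (hu : (Equiv.Perm.permMatrix ℂ (σ.toEquiv : Equiv.Perm V)).mulVec
        (Pi.single u 1 : V → ℂ) = (Pi.single u 1 : V → ℂ)) :
    (Equiv.Perm.permMatrix ℂ (σ.toEquiv : Equiv.Perm V)).mulVec
      (Pi.single v 1 : V → ℂ) = (Pi.single v 1 : V → ℂ) := by
  set P := Equiv.Perm.permMatrix ℂ (σ.toEquiv : Equiv.Perm V)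
  have hcomm (k : ℕ) : Function.Commute P.mulVec
      (NormedSpace.exp ((-(t k : ℂ) * Complex.I) • G.adjMatrix ℂ)).mulVec :=
    Matrix.commute_mulVec ((σ.commute_permMatrix_adjMatrix.smul_right _).exp_right)
  have hlim : P *ᵥ (γ • Pi.single v 1) = γ • Pi.single v 1 :=
    Function.IsFixedPt.of_tendsto_of_commute (LinearMap.continuous_of_finiteDimensional P.mulVecLin)
      hu hcomm hpgst
  have hγ0 : γ ≠ 0 := norm_ne_zero_iff.mp (hγ ▸ one_ne_zero)
  rw [mulVec_smul] at hlim
  exact smul_right_injective _ hγ0 hlim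
end

section
/- If the circulant graph Cay(Z_n, S) exhibits pretty good state transfer between some pair of distinct vertices, then n is even, and PGST occurs only between pairs of vertices of the form u and u + n/2 (mod n). -/
open Matrix Complex Filter Finset

/-- Adjacency matrix of the circulant graph Cay(Z_n, S). -/
noncomputable def cayAdj (n : ℕ) [NeZero n] (S : Finset (ZMod n)) : Matrix (ZMod n) (ZMod n) ℂ :=
  fun a b => if a - b ∈ S then 1 else 0

/-- Transition matrix H(t) = exp(-itA) of Cay(Z_n, S). -/
noncomputable def transM (n : ℕ) [NeZero n] (S : Finset (ZMod n)) (t : ℝ) :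
    Matrix (ZMod n) (ZMod n) ℂ :=
  NormedSpace.exp ((-(t : ℂ) * Complex.I) • cayAdj n S)

/-! Reflection about a vertex, `j ↦ 2u - j`, is an automorphism of `Cay(Z_n, S)` fixing `u`
(this is where `-S = S` enters), so it commutes with `exp(-itA)` and fixes each column
`exp(-itA) e_u`. A limit `γ e_v` of these columns is fixed as well, so `v = 2u - v`; since
`v ≠ u`, `v - u` is an element of order two in `Z_n`, which exists only for even `n` and is then
`n / 2`. -/

namespace Matrix

variable {ι : Type*} [Fintype ι] [DecidableEq ι]

lemma exp_submatrix (σ : ι ≃ ι) (M : Matrix ι ι ℂ) :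
    (NormedSpace.exp M).submatrix σ σ = NormedSpace.exp (M.submatrix σ σ) := by
  -- `exp` does not depend on the norm; the operator norm just makes `map_exp` applicable.
  let : NormedRing (Matrix ι ι ℂ) := Matrix.linftyOpNormedRing
  let : NormedAlgebra ℂ (Matrix ι ι ℂ) := Matrix.linftyOpNormedAlgebra
  let : NormedAlgebra ℚ (Matrix ι ι ℂ) := NormedAlgebra.restrictScalars ℚ ℂ _
  let e := reindexAlgEquiv ℂ ℂ σ.symm
  exact NormedSpace.map_exp e e.toLinearMap.continuous_of_finiteDimensional M

lemma apply_eq_self_of_tendsto_mulVec_single {R α : Type*} [Semiring R] [TopologicalSpace R]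
    [T2Space R] {l : Filter α} [l.NeBot] {M : α → Matrix ι ι R} {σ : ι ≃ ι}
    (hM : ∀ k, (M k).submatrix σ σ = M k) {u v : ι} (hu : σ u = u) {γ : R} (hγ : γ ≠ 0)
    (h : Tendsto (fun k => M k *ᵥ Pi.single u 1) l (nhds (γ • Pi.single v 1))) :
    σ v = v := by
  have hcoord (a : ι) : Tendsto (fun k => M k a u) l (nhds ((γ • Pi.single v 1 : ι → R) a)) := by
    simpa only [mulVec_single_one, col_apply] using tendsto_pi_nhds.mp h a
  have hsame : (fun k => M k (σ v) u) = fun k => M k v u := by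
    funext k
    conv_rhs => rw [← hM k, submatrix_apply, hu]
  have hlim := tendsto_nhds_unique (hsame ▸ hcoord (σ v)) (hcoord v)
  by_contra hne
  simp [Pi.single_eq_of_ne hne, hγ.symm] at hlim

end Matrix

lemma ZMod.two_dvd_and_eq_half_of_two_mul_eq_zero {n : ℕ} [NeZero n] {d : ZMod n} (hd : d ≠ 0)
    (h2d : 2 * d = 0) : 2 ∣ n ∧ d = ((n / 2 : ℕ) : ZMod n) := by
  have hpos : 0 < d.val := Nat.pos_of_ne_zero ((ZMod.val_ne_zero d).mpr hd)
  have hlt : d.val < n := ZMod.val_lt d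
  obtain ⟨c, hc⟩ : n ∣ 2 * d.val := by
    rw [← ZMod.natCast_eq_zero_iff]
    push_cast
    rwa [ZMod.natCast_zmod_val]
  have hc1 : c = 1 := by
    have : c < 2 := Nat.lt_of_mul_lt_mul_left (a := n) (by omega)
    interval_cases c <;> omega
  subst hc1
  refine ⟨⟨d.val, by omega⟩, ?_⟩
  rw [show n / 2 = d.val by omega, ZMod.natCast_zmod_val]

lemma cayAdj_submatrix_subLeft {n : ℕ} [NeZero n] {S : Finset (ZMod n)}
    (hsym : ∀ s ∈ S, -s ∈ S) (c : ZMod n) :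
    (cayAdj n S).submatrix (Equiv.subLeft c) (Equiv.subLeft c) = cayAdj n S := by
  ext a b
  have hdiff : (c - a) - (c - b) = -(a - b) := by ring
  have hmem : -(a - b) ∈ S ↔ a - b ∈ S := ⟨fun h => by simpa using hsym _ h, hsym _⟩
  simp only [submatrix_apply, Equiv.subLeft_apply, cayAdj, hdiff, hmem]

lemma transM_submatrix_subLeft {n : ℕ} [NeZero n] {S : Finset (ZMod n)}
    (hsym : ∀ s ∈ S, -s ∈ S) (c : ZMod n) (t : ℝ) :
    (transM n S t).submatrix (Equiv.subLeft c) (Equiv.subLeft c) = transM n S t := by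
  rw [transM, exp_submatrix]
  exact congrArg (fun A => NormedSpace.exp ((-(t : ℂ) * I) • A)) (cayAdj_submatrix_subLeft hsym c)

theorem stmt5_general (n : ℕ) [NeZero n] (S : Finset (ZMod n))
    (hsym : ∀ s ∈ S, -s ∈ S) (u v : ZMod n) (huv : u ≠ v) (t : ℕ → ℝ) (γ : ℂ)
    (hγ : ‖γ‖ = 1)
    (hpgst : Tendsto (fun k => (transM n S (t k)).mulVec (Pi.single u 1 : ZMod n → ℂ))
      atTop (nhds (γ • (Pi.single v 1 : ZMod n → ℂ)))) :
    2 ∣ n ∧ v = u + ((n / 2 : ℕ) : ZMod n) := by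
  have hfix : Equiv.subLeft (u + u) v = v :=
    apply_eq_self_of_tendsto_mulVec_single (fun k => transM_submatrix_subLeft hsym (u + u) (t k))
      (by simp) (norm_ne_zero_iff.mp (hγ ▸ one_ne_zero)) hpgst
  have h2 : 2 * (v - u) = 0 := by
    rw [Equiv.subLeft_apply] at hfix
    linear_combination -hfix
  obtain ⟨hn, hhalf⟩ := ZMod.two_dvd_and_eq_half_of_two_mul_eq_zero (sub_ne_zero.mpr huv.symm) h2
  exact ⟨hn, by rw [← hhalf]; ring⟩

/-- If Cay(Z_n, S) exhibits pretty good state transfer between distinct vertices u and v,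
then n is even and v = u + n/2. -/
theorem stmt5 (n : ℕ) [NeZero n] (S : Finset (ZMod n)) (h0 : (0 : ZMod n) ∉ S)
    (hsym : ∀ s ∈ S, -s ∈ S) (u v : ZMod n) (huv : u ≠ v) (t : ℕ → ℝ) (γ : ℂ)
    (hγ : ‖γ‖ = 1)
    (hpgst : Tendsto (fun k => (transM n S (t k)).mulVec (Pi.single u 1 : ZMod n → ℂ))
      atTop (nhds (γ • (Pi.single v 1 : ZMod n → ℂ)))) :
    2 ∣ n ∧ v = u + ((n / 2 : ℕ) : ZMod n) :=
  stmt5_general n S hsym u v huv t γ hγ hpgst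
end

section
/- Let 2 ≤ k' < k. If the cycle C_{2^k} admits pretty good state transfer (between 0 and 2^{k-1}) with respect to a real sequence {t_m}, then the cycle C_{2^{k'}} is almost periodic with respect to some subsequence of {t_m}, i.e., there is a subsequence {t'_m} and unimodular γ with lim_{m→∞} H'(t'_m) = γ I, where H' is the transition matrix of C_{2^{k'}}. -/
open Matrix Complex Filter Finset

/-!
The discrete Fourier transform on `ZMod N` diagonalises every circulant adjacency matrix: with
`ψ = ZMod.stdAddChar`, the row `a ↦ ψ(-(a l))` is a left eigenvector with eigenvalue
`λ_l = ∑_{s ∈ S} ψ(-(s l))`, so `H(t)` multiplies the `l`-th Fourier coefficient by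
`exp (-i t λ_l)`. Taking Fourier coefficients in the PGST limit `H(t_m) e₀ → γ e_{N/2}` gives
`exp (-i t_m λ_l) → γ ψ(-(l N/2)) = γ (-1)^l`. For `N = 2^k` and `M = 2^{k'}`, the eigenvalue of
`C_M` at `l` is that of `C_N` at the even index `2^{k-k'} l`, so every phase of `C_M` tends to
`γ`, and Fourier inversion turns this into `H'(t_m) → γ I` along the whole sequence.
-/

open ZMod Topology

namespace Matrix

variable {ι : Type*} [Fintype ι]

theorem vecMul_pow_of_vecMul_eq_smul {R : Type*} [CommSemiring R] [DecidableEq ι]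
    {A : Matrix ι ι R} {w : ι → R} {μ : R} (h : w ᵥ* A = μ • w) (j : ℕ) :
    w ᵥ* A ^ j = μ ^ j • w := by
  induction j with
  | zero => simp
  | succ j ih => rw [pow_succ, ← vecMul_vecMul, ih, smul_vecMul, h, smul_smul, pow_succ]

theorem vecMul_exp_of_vecMul_eq_smul [DecidableEq ι]
    {A : Matrix ι ι ℂ} {w : ι → ℂ} {μ : ℂ} (h : w ᵥ* A = μ • w) :
    w ᵥ* NormedSpace.exp A = NormedSpace.exp μ • w := by
  -- any norm inducing the product topology gives access to the exponential series
  let _ := Matrix.linftyOpNormedRing (n := ι) (α := ℂ)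
  let _ := Matrix.linftyOpNormedAlgebra (R := ℂ) (n := ι) (α := ℂ)
  let vecMulLeft : Matrix ι ι ℂ →+ ι → ℂ :=
    { toFun := (w ᵥ* ·), map_zero' := vecMul_zero w, map_add' := fun B C => vecMul_add B C w }
  have hA := (NormedSpace.exp_series_hasSum_exp' (𝕂 := ℂ) A).map vecMulLeft
    (continuous_const.matrix_vecMul continuous_id)
  have hμ := (NormedSpace.exp_series_hasSum_exp' (𝕂 := ℂ) μ).smul_const w
  refine hA.unique ?_
  convert hμ using 2 with j
  change w ᵥ* ((j.factorial : ℂ)⁻¹ • A ^ j) = _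
  rw [vecMul_smul, vecMul_pow_of_vecMul_eq_smul h, smul_smul, smul_eq_mul]

end Matrix

section Circulant

variable {N : ℕ} [NeZero N]

noncomputable def cayAdjEigenvalue (S : Finset (ZMod N)) (l : ZMod N) : ℂ :=
  ∑ s ∈ S, stdAddChar (-(s * l))

theorem stdAddChar_vecMul_cayAdj (S : Finset (ZMod N)) (l : ZMod N) :
    (fun a => stdAddChar (-(a * l))) ᵥ* cayAdj N S =
      cayAdjEigenvalue S l • fun a => stdAddChar (-(a * l)) := by
  funext b
  calc ((fun a => stdAddChar (-(a * l))) ᵥ* cayAdj N S) b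
      = ∑ s, if s ∈ S then stdAddChar (-(s * l)) * stdAddChar (-(b * l)) else 0 := by
        rw [vecMul, dotProduct, ← Equiv.sum_comp (Equiv.addLeft b)]
        refine Finset.sum_congr rfl fun s _ => ?_
        simp [cayAdj, add_mul, AddChar.map_add_eq_mul]
    _ = (cayAdjEigenvalue S l • fun a => stdAddChar (-(a * l))) b := by
        rw [Fintype.sum_ite_mem, ← Finset.sum_mul, cayAdjEigenvalue, Pi.smul_apply, smul_eq_mul]

theorem dft_apply_eq_dotProduct (v : ZMod N → ℂ) (l : ZMod N) :
    𝓕 v l = (fun a => stdAddChar (-(a * l))) ⬝ᵥ v := rfl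

theorem dft_single_one (b l : ZMod N) : 𝓕 (Pi.single b 1) l = stdAddChar (-(b * l)) := by
  simp [dft_apply, Pi.single_apply]

theorem dft_transM_mulVec (S : Finset (ZMod N)) (t : ℝ) (v : ZMod N → ℂ) (l : ZMod N) :
    𝓕 (transM N S t *ᵥ v) l = Complex.exp (-(t : ℂ) * I * cayAdjEigenvalue S l) * 𝓕 v l := by
  have hrow := vecMul_exp_of_vecMul_eq_smul (A := (-(t : ℂ) * I) • cayAdj N S)
    (w := fun a => stdAddChar (-(a * l)))
    (by rw [vecMul_smul, stdAddChar_vecMul_cayAdj, smul_smul])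
  rw [dft_apply_eq_dotProduct, dft_apply_eq_dotProduct, transM, dotProduct_mulVec, hrow,
    smul_dotProduct, smul_eq_mul, Complex.exp_eq_exp_ℂ]

variable {α : Type*} {F : Filter α} {S : Finset (ZMod N)} {t : α → ℝ} {γ : ℂ}

theorem tendsto_exp_eigenvalue_of_tendsto_transM_mulVec {c : ZMod N}
    (h : Tendsto (fun m => transM N S (t m) *ᵥ Pi.single 0 1) F (𝓝 (γ • Pi.single c 1)))
    (l : ZMod N) :
    Tendsto (fun m => Complex.exp (-(t m : ℂ) * I * cayAdjEigenvalue S l)) F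
      (𝓝 (γ * stdAddChar (-(c * l)))) := by
  have hdft := tendsto_pi_nhds.1
    (((dft (N := N) (E := ℂ)).toLinearMap.continuous_of_finiteDimensional.tendsto _).comp h) l
  simpa only [Function.comp_def, LinearEquiv.coe_coe, dft_transM_mulVec, _root_.map_smul,
    Pi.smul_apply, dft_single_one, zero_mul, neg_zero, AddChar.map_zero_eq_one, mul_one,
    smul_eq_mul] using hdft

theorem tendsto_transM_of_tendsto_exp_eigenvalue
    (h : ∀ l, Tendsto (fun m => Complex.exp (-(t m : ℂ) * I * cayAdjEigenvalue S l)) F (𝓝 γ)) :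
    Tendsto (fun m => transM N S (t m)) F (𝓝 (γ • 1)) := by
  have hcol (v : ZMod N → ℂ) : Tendsto (fun m => transM N S (t m) *ᵥ v) F (𝓝 (γ • v)) := by
    have hdft : Tendsto (fun m => 𝓕 (transM N S (t m) *ᵥ v)) F (𝓝 (𝓕 (γ • v))) := by
      refine tendsto_pi_nhds.2 fun l => ?_
      simp only [dft_transM_mulVec, _root_.map_smul, Pi.smul_apply, smul_eq_mul]
      exact (h l).mul_const _
    simpa only [Function.comp_def, LinearEquiv.coe_coe, LinearEquiv.symm_apply_apply] using
      ((𝓕⁻ : (ZMod N → ℂ) ≃ₗ[ℂ] _).toLinearMap.continuous_of_finiteDimensional.tendsto _).comp hdft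
  refine tendsto_pi_nhds.2 fun a => tendsto_pi_nhds.2 fun b => ?_
  simpa [mulVec_single_one, Pi.single_apply, one_apply] using
    tendsto_pi_nhds.1 (hcol (Pi.single b 1)) a

theorem cayAdjEigenvalue_cycle (h : (1 : ZMod N) ≠ -1) (l : ZMod N) :
    cayAdjEigenvalue {1, -1} l = stdAddChar (-l) + stdAddChar l := by
  simp [cayAdjEigenvalue, Finset.sum_pair h]

end Circulant

theorem stdAddChar_natCast_mul {N M d : ℕ} [NeZero N] [NeZero M] (hN : N = d * M) (j : ℕ) :
    stdAddChar ((d * j : ℕ) : ZMod N) = stdAddChar (j : ZMod M) := by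
  have hd : (d : ℂ) ≠ 0 := Nat.cast_ne_zero.2 (left_ne_zero_of_mul (hN ▸ NeZero.ne N))
  rw [← Int.cast_natCast, stdAddChar_coe, ← Int.cast_natCast (R := ZMod M), stdAddChar_coe, hN]
  congr 1
  push_cast
  field_simp

theorem cayAdjEigenvalue_cycle_natCast_mul {N M d : ℕ} [NeZero N] [NeZero M] (hN : N = d * M)
    (hM : 2 < M) (l : ZMod M) :
    cayAdjEigenvalue {1, -1} ((d * l.val : ℕ) : ZMod N) = cayAdjEigenvalue {1, -1} l := by
  have hd : d ≠ 0 := left_ne_zero_of_mul (hN ▸ NeZero.ne N)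
  have hN2 : Fact (2 < N) := ⟨hN ▸ hM.trans_le (Nat.le_mul_of_pos_left M (Nat.pos_of_ne_zero hd))⟩
  have hM2 : Fact (2 < M) := ⟨hM⟩
  rw [cayAdjEigenvalue_cycle neg_one_ne_one.symm, cayAdjEigenvalue_cycle neg_one_ne_one.symm,
    AddChar.map_neg_eq_inv, AddChar.map_neg_eq_inv, stdAddChar_natCast_mul hN, natCast_zmod_val]

/-- If C_{2^k} admits PGST (between 0 and 2^{k-1}) with respect to a sequence {t_m},
then C_{2^{k'}} (2 ≤ k' < k) is almost periodic with respect to a subsequence. -/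
theorem stmt8 (k k' : ℕ) (hk' : 2 ≤ k') (hkk : k' < k)
    (n n' : ℕ) [NeZero n] [NeZero n'] (hn : n = 2 ^ k) (hn' : n' = 2 ^ k')
    (t : ℕ → ℝ) (γ : ℂ) (hγ : ‖γ‖ = 1)
    (hpgst : Tendsto (fun m => (transM n {1, -1} (t m)).mulVec (Pi.single 0 1 : ZMod n → ℂ))
      atTop (nhds (γ • (Pi.single ((2 ^ (k - 1) : ℕ) : ZMod n) 1 : ZMod n → ℂ)))) :
    ∃ φ : ℕ → ℕ, StrictMono φ ∧ ∃ δ : ℂ, ‖δ‖ = 1 ∧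
      Tendsto (fun m => transM n' {1, -1} (t (φ m))) atTop
        (nhds (δ • (1 : Matrix (ZMod n') (ZMod n') ℂ))) := by
  have hd : n = 2 ^ (k - k') * n' := by rw [hn, hn', ← pow_add, Nat.sub_add_cancel hkk.le]
  have hn'3 : 2 < n' := hn' ▸ (Nat.pow_le_pow_right two_pos hk').trans_lt' (by norm_num)
  refine ⟨id, strictMono_id, γ, hγ, tendsto_transM_of_tendsto_exp_eigenvalue fun l => ?_⟩
  have hhalf : ((2 ^ (k - 1) : ℕ) : ZMod n) * ((2 ^ (k - k') * l.val : ℕ) : ZMod n) = 0 := by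
    rw [← Nat.cast_mul, ZMod.natCast_eq_zero_iff, hn, ← mul_assoc, ← pow_add]
    exact (pow_dvd_pow 2 (by omega)).mul_right _
  have hphase := tendsto_exp_eigenvalue_of_tendsto_transM_mulVec hpgst
    ((2 ^ (k - k') * l.val : ℕ) : ZMod n)
  rwa [hhalf, neg_zero, AddChar.map_zero_eq_one, mul_one,
    cayAdjEigenvalue_cycle_natCast_mul hd hn'3] at hphase
end

section
/- A circulant graph Cay(Z_n, S) is integral (all eigenvalues of its adjacency matrix are integers) if and only if S is a gcd-set, i.e., S is a union of sets S_n(d) = { x ∈ Z_n : gcd(x,n) = d } over some set D of proper divisors d of n. -/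
/-!
For a primitive additive character `ψ` of `ℤ_n` the DFT matrix `(ψ(-ak))` diagonalises every
circulant matrix, so the eigenvalues of `Cay(ℤ_n, S)` are `λ_k = ∑_{s ∈ S} ψ(sk)`. Taking `ψ` with
values in `ℚ(ζ_n)`, the Galois automorphism attached to `u ∈ (ℤ_n)ˣ` sends `λ_k` to `λ_{uk}`, and a
Galois-invariant algebraic integer is a rational integer. Hence the `λ_k` are all integers iff
`λ_{uk} = λ_k` for all units `u`, which by Fourier inversion says that `S` is stable under
multiplication by units. The orbits of `(ℤ_n)ˣ` on `ℤ_n` are exactly the sets `S_n(d)`, and `0 ∉ S`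
excludes `d = n`.
-/

open Matrix Complex Filter Finset

/-- The set S_n(d) = { x ∈ Z_n : gcd(x, n) = d }. -/
def gcdSet (n : ℕ) [NeZero n] (d : ℕ) : Finset (ZMod n) :=
  Finset.univ.filter (fun x : ZMod n => Nat.gcd x.val n = d)

section UnitsGcd

variable {n : ℕ}

lemma ZMod.gcd_val_unit_mul (u : (ZMod n)ˣ) (x : ZMod n) :
    ((u : ZMod n) * x).val.gcd n = x.val.gcd n := by
  rw [ZMod.val_mul, ← Nat.gcd_rec, Nat.gcd_comm,
    Nat.Coprime.gcd_mul_left_cancel _ (ZMod.val_coe_unit_coprime u)]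

lemma ZMod.gcd_val_natCast_of_dvd {d : ℕ} (hd : d ∣ n) : ((d : ZMod n).val).gcd n = d := by
  rw [ZMod.val_natCast, ← Nat.gcd_rec, Nat.gcd_comm, Nat.gcd_eq_left hd]

lemma ZMod.exists_unit_mul_gcd_val [NeZero n] (x : ZMod n) :
    ∃ u : (ZMod n)ˣ, x = u * (x.val.gcd n : ℕ) := by
  obtain ⟨d, hd, u, hu, rfl⟩ := ZMod.eq_unit_mul_divisor x
  refine ⟨hu.unit, ?_⟩
  rw [IsUnit.unit_spec, ← hu.unit_spec, ZMod.gcd_val_unit_mul, ZMod.gcd_val_natCast_of_dvd hd]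

lemma ZMod.exists_unit_mul_eq_of_gcd_val_eq [NeZero n] {x y : ZMod n}
    (h : x.val.gcd n = y.val.gcd n) : ∃ u : (ZMod n)ˣ, u * y = x := by
  obtain ⟨u, hu⟩ := ZMod.exists_unit_mul_gcd_val x
  obtain ⟨v, hv⟩ := ZMod.exists_unit_mul_gcd_val y
  refine ⟨u * v⁻¹, ?_⟩
  rw [hu, hv, h, Units.val_mul, mul_assoc, Units.inv_mul_cancel_left]

end UnitsGcd

def IsUnitsInvariant {n : ℕ} (S : Finset (ZMod n)) : Prop :=
  ∀ (u : (ZMod n)ˣ) (x : ZMod n), (u : ZMod n) * x ∈ S ↔ x ∈ S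

lemma mem_gcdSet {n : ℕ} [NeZero n] {d : ℕ} {x : ZMod n} : x ∈ gcdSet n d ↔ x.val.gcd n = d := by
  simp [gcdSet]

lemma isUnitsInvariant_iff_exists_gcdSet {n : ℕ} [NeZero n] {S : Finset (ZMod n)}
    (h0 : (0 : ZMod n) ∉ S) :
    IsUnitsInvariant S ↔ ∃ D : Finset ℕ, (∀ d ∈ D, d ∣ n ∧ d < n) ∧
      S = D.biUnion (fun d => gcdSet n d) := by
  constructor
  · intro hS
    refine ⟨S.image fun s => s.val.gcd n, ?_, ?_⟩
    · simp only [Finset.mem_image, forall_exists_index, and_imp]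
      rintro _ s hs rfl
      have hs0 : s.val ≠ 0 := fun h => h0 ((ZMod.val_eq_zero s).1 h ▸ hs)
      exact ⟨Nat.gcd_dvd_right _ _,
        (Nat.gcd_le_left _ (Nat.pos_of_ne_zero hs0)).trans_lt (ZMod.val_lt s)⟩
    · ext x
      simp only [Finset.mem_biUnion, Finset.mem_image, mem_gcdSet]
      refine ⟨fun hx => ⟨_, ⟨x, hx, rfl⟩, rfl⟩, ?_⟩
      rintro ⟨_, ⟨s, hs, rfl⟩, hxs⟩
      obtain ⟨u, rfl⟩ := ZMod.exists_unit_mul_eq_of_gcd_val_eq hxs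
      exact (hS u s).2 hs
  · rintro ⟨D, -, rfl⟩ u x
    simp only [Finset.mem_biUnion, mem_gcdSet, ZMod.gcd_val_unit_mul]

lemma AddChar.zmod_pow_eq_one {n : ℕ} {M : Type*} [Monoid M] (ψ : AddChar (ZMod n) M)
    (a : ZMod n) : ψ a ^ n = 1 := by
  rw [← AddChar.map_nsmul_eq_pow, ZModModule.char_nsmul_eq_zero, AddChar.map_zero_eq_one]

section Eigenvalues

variable {n : ℕ} {R : Type*} [CommRing R]

/-- The eigenvalue `∑_{s ∈ S} ω^{sk}`, with the primitive root `ω` encoded as the character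
`ψ = ω^(·)`. -/
def cayEigenvalue (ψ : AddChar (ZMod n) R) (S : Finset (ZMod n)) (k : ZMod n) : R :=
  ∑ s ∈ S, ψ (s * k)

lemma cayEigenvalue_compAddChar {R' : Type*} [CommRing R'] (f : R →+* R')
    (ψ : AddChar (ZMod n) R) (S : Finset (ZMod n)) (k : ZMod n) :
    cayEigenvalue (f.toMonoidHom.compAddChar ψ) S k = f (cayEigenvalue ψ S k) := by
  simp [cayEigenvalue, map_sum]

lemma isIntegral_cayEigenvalue [NeZero n] (ψ : AddChar (ZMod n) R) (S : Finset (ZMod n))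
    (k : ZMod n) : IsIntegral ℤ (cayEigenvalue ψ S k) :=
  IsIntegral.sum _ fun s _ => IsIntegral.of_pow (NeZero.pos n) <|
    (ψ.zmod_pow_eq_one (s * k)).symm ▸ isIntegral_one

variable [IsDomain R] {ψ : AddChar (ZMod n) R}

lemma sum_cayEigenvalue_mul [NeZero n] (hψ : ψ.IsPrimitive) (S : Finset (ZMod n)) (x : ZMod n) :
    ∑ k, cayEigenvalue ψ S k * ψ (-(k * x)) = if x ∈ S then (n : R) else 0 := by
  calc ∑ k, cayEigenvalue ψ S k * ψ (-(k * x))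
      = ∑ s ∈ S, ∑ k, ψ (k * (s - x)) := by
        simp only [cayEigenvalue, Finset.sum_mul, ← AddChar.map_add_eq_mul]
        rw [Finset.sum_comm]
        congr! 3 with s _ k
        ring
    _ = ∑ s ∈ S, if x = s then (n : R) else 0 := by
        refine Finset.sum_congr rfl fun s _ => ?_
        rw [AddChar.sum_mulShift _ hψ, ZMod.card]
        simp [sub_eq_zero, eq_comm]
    _ = if x ∈ S then (n : R) else 0 := Finset.sum_ite_eq S x _

lemma cayEigenvalue_unit_mul_iff [NeZero n] [NeZero (n : R)] (hψ : ψ.IsPrimitive)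
    {S : Finset (ZMod n)} :
    (∀ (u : (ZMod n)ˣ) (k : ZMod n), cayEigenvalue ψ S (u * k) = cayEigenvalue ψ S k) ↔
      IsUnitsInvariant S := by
  constructor
  · intro h u x
    have key : (if (u : ZMod n) * x ∈ S then (n : R) else 0) = if x ∈ S then (n : R) else 0 := by
      rw [← sum_cayEigenvalue_mul hψ, ← sum_cayEigenvalue_mul hψ]
      refine Fintype.sum_equiv (Units.mulLeft u) _ _ fun k => ?_
      rw [Units.mulLeft_apply, h]
      congr 2
      ring
    split_ifs at key <;> simp_all [(NeZero.ne (n : R)).symm]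
  · intro hS u k
    refine Finset.sum_equiv (Units.mulLeft u) (fun s => (hS u s).symm) fun s _ => ?_
    rw [Units.mulLeft_apply, mul_left_comm, mul_assoc]

end Eigenvalues

section Galois

variable {n : ℕ} [NeZero n] {K : Type*} [Field K] [NumberField K] [IsCyclotomicExtension {n} ℚ K]

open IsCyclotomicExtension.Rat

lemma galEquivZMod_addChar (ψ : AddChar (ZMod n) K) (σ : Gal(K/ℚ)) (a : ZMod n) :
    σ (ψ a) = ψ (galEquivZMod n K σ * a) := by
  rw [galEquivZMod_apply_of_pow_eq n K σ (ψ.zmod_pow_eq_one a), ← AddChar.map_nsmul_eq_pow,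
    nsmul_eq_mul, ZMod.natCast_zmod_val]

lemma galEquivZMod_cayEigenvalue (ψ : AddChar (ZMod n) K) (S : Finset (ZMod n)) (σ : Gal(K/ℚ))
    (k : ZMod n) : σ (cayEigenvalue ψ S k) = cayEigenvalue ψ S (galEquivZMod n K σ * k) := by
  simp only [cayEigenvalue, map_sum, galEquivZMod_addChar, mul_left_comm]

lemma exists_intCast_eq_of_isIntegral_of_forall_fixed {E : Type*} [Field E] [NumberField E]
    [IsGalois ℚ E] {x : E} (hx : IsIntegral ℤ x) (hfix : ∀ σ : Gal(E/ℚ), σ x = x) :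
    ∃ m : ℤ, x = m := by
  obtain ⟨q, rfl⟩ := (IsGalois.mem_range_algebraMap_iff_fixed x).2 hfix
  obtain ⟨m, rfl⟩ := IsIntegrallyClosed.isIntegral_iff.1
    ((isIntegral_algebraMap_iff (algebraMap ℚ E).injective).1 hx)
  exact ⟨m, by simp⟩

lemma exists_intCast_cayEigenvalue_iff {ψ : AddChar (ZMod n) K} (hψ : ψ.IsPrimitive)
    {S : Finset (ZMod n)} : (∀ k, ∃ m : ℤ, cayEigenvalue ψ S k = m) ↔ IsUnitsInvariant S := by
  have := IsCyclotomicExtension.isGalois {n} ℚ K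
  rw [← cayEigenvalue_unit_mul_iff hψ]
  constructor
  · intro h u k
    obtain ⟨m, hm⟩ := h k
    have := galEquivZMod_cayEigenvalue ψ S ((galEquivZMod n K).symm u) k
    rwa [MulEquiv.apply_symm_apply, hm, map_intCast, ← hm, eq_comm] at this
  · intro h k
    exact exists_intCast_eq_of_isIntegral_of_forall_fixed (isIntegral_cayEigenvalue ψ S k)
      fun σ => by rw [galEquivZMod_cayEigenvalue, h]

end Galois

section Spectrum

variable {n : ℕ} [NeZero n] {R : Type*} [CommRing R]

def fourierMatrix (ψ : AddChar (ZMod n) R) : Matrix (ZMod n) (ZMod n) R :=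
  Matrix.of fun a k => ψ (-(a * k))

lemma fourierMatrix_mul_fourierMatrix_inv [IsDomain R] {ψ : AddChar (ZMod n) R}
    (hψ : ψ.IsPrimitive) : fourierMatrix ψ * fourierMatrix ψ⁻¹ = (n : R) • 1 := by
  ext a b
  simp only [fourierMatrix, Matrix.mul_apply, Matrix.of_apply, AddChar.inv_apply,
    ← AddChar.map_add_eq_mul, Matrix.smul_apply, Matrix.one_apply]
  have h : ∀ k, -(a * k) + -(-(k * b)) = k * (b - a) := fun k => by ring
  simp only [h, AddChar.sum_mulShift _ hψ, ZMod.card, sub_eq_zero, eq_comm (a := b)]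
  split_ifs <;> simp

lemma cayAdj_mul_fourierMatrix (ψ : AddChar (ZMod n) ℂ) (S : Finset (ZMod n)) :
    cayAdj n S * fourierMatrix ψ = fourierMatrix ψ * Matrix.diagonal (cayEigenvalue ψ S) := by
  ext a k
  rw [Matrix.mul_diagonal, Matrix.mul_apply, ← (Equiv.subLeft a).sum_comp]
  simp only [cayAdj, fourierMatrix, Matrix.of_apply, Equiv.subLeft_apply, sub_sub_cancel,
    boole_mul, Finset.sum_ite_mem, Finset.univ_inter, cayEigenvalue, Finset.mul_sum,
    ← AddChar.map_add_eq_mul]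
  congr! 2 with s
  ring

theorem spectrum_cayAdj {ψ : AddChar (ZMod n) ℂ} (hψ : ψ.IsPrimitive) (S : Finset (ZMod n)) :
    spectrum ℂ (cayAdj n S) = Set.range (cayEigenvalue ψ S) := by
  have hF : fourierMatrix ψ * ((n : ℂ)⁻¹ • fourierMatrix ψ⁻¹) = 1 := by
    rw [Matrix.mul_smul, fourierMatrix_mul_fourierMatrix_inv hψ, smul_smul,
      inv_mul_cancel₀ (NeZero.ne _), one_smul]
  let F : (Matrix (ZMod n) (ZMod n) ℂ)ˣ := ⟨_, _, hF, mul_eq_one_comm.1 hF⟩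
  have hA : cayAdj n S = (F : Matrix (ZMod n) (ZMod n) ℂ) * diagonal (cayEigenvalue ψ S) *
      ((F⁻¹ : (Matrix (ZMod n) (ZMod n) ℂ)ˣ) : Matrix (ZMod n) (ZMod n) ℂ) := by
    change _ = fourierMatrix ψ * _ * ((n : ℂ)⁻¹ • fourierMatrix ψ⁻¹)
    rw [← cayAdj_mul_fourierMatrix, mul_assoc, hF, mul_one]
  rw [hA, spectrum.units_conjugate, spectrum_diagonal]

end Spectrum

theorem stmt10_general (n : ℕ) [NeZero n] (S : Finset (ZMod n)) (h0 : (0 : ZMod n) ∉ S) :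
    (∀ μ ∈ spectrum ℂ (cayAdj n S), ∃ m : ℤ, μ = (m : ℂ)) ↔
      ∃ D : Finset ℕ, (∀ d ∈ D, d ∣ n ∧ d < n) ∧
        S = D.biUnion (fun d => gcdSet n d) := by
  let K := CyclotomicField n ℚ
  have : IsCyclotomicExtension {n} ℚ K := CyclotomicField.isCyclotomicExtension n ℚ
  have hζ := IsCyclotomicExtension.zeta_spec n ℚ K
  have hψ := AddChar.zmodChar_primitive_of_primitive_root n hζ
  let φ : K →+* ℂ := (IsAlgClosed.lift : K →ₐ[ℚ] ℂ).toRingHom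
  rw [spectrum_cayAdj (ψ := φ.toMonoidHom.compAddChar _)
      (hψ.compMulHom_of_isPrimitive φ.injective),
    ← isUnitsInvariant_iff_exists_gcdSet h0, ← exists_intCast_cayEigenvalue_iff hψ]
  simp only [Set.forall_mem_range]
  refine forall_congr' fun k => exists_congr fun m => ?_
  rw [cayEigenvalue_compAddChar, ← map_intCast φ, φ.injective.eq_iff, eq_comm]

/-- A circulant graph Cay(Z_n, S) is integral iff S is a gcd-set, i.e. a union of the
sets S_n(d) over a set D of proper divisors d of n. -/
theorem stmt10 (n : ℕ) [NeZero n] (S : Finset (ZMod n)) (h0 : (0 : ZMod n) ∉ S)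
    (hsym : ∀ s ∈ S, -s ∈ S) :
    (∀ μ ∈ spectrum ℂ (cayAdj n S), ∃ m : ℤ, μ = (m : ℂ)) ↔
      ∃ D : Finset ℕ, (∀ d ∈ D, d ∣ n ∧ d < n) ∧
        S = D.biUnion (fun d => gcdSet n d) :=
  stmt10_general n S h0
end

section
/- Suppose the circulant graphs Cay(Z_n, S₁), Cay(Z_n, S₂), Cay(Z_n, S₃) with pairwise disjoint symmetric connection sets S₁, S₂, S₃ and transition matrices H₁, H₂, H₃ satisfy: along a common real sequence {t_m}, H₁(t_m)e_0 → γ e_{n/2}, H₂(t_m)e_0 → ζ e_0, and H₃(t_m) = I for all m. Then the transition matrix H of Cay(Z_n, S₁ ∪ S₂ ∪ S₃) satisfies H(t_m)e_0 → ζγ e_{n/2}. -/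
open Matrix Complex Filter Finset

/-!
A transition matrix `exp (-itA)` of a circulant graph commutes with every circulant matrix,
hence is itself circulant and determined by its column `H(t)e₀`. Adjacency matrices of
disjoint connection sets add and commute, so `H = H₁H₂H₃`, and with `H₃(t_m) = 1` the vector
`H(t_m)e₀ = H₁(t_m)(H₂(t_m)e₀)` is the cyclic convolution of `H₁(t_m)e₀` and `H₂(t_m)e₀`.
Convolution is continuous, so the limit is `γe_{n/2} ∗ ζe₀ = ζγe_{n/2}`.
-/

namespace Matrix

theorem commute_circulant {ι R : Type*} [Fintype ι] [AddCommGroup ι] [CommSemiring R]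
    (v w : ι → R) : Commute (circulant v) (circulant w) :=
  circulant_mul_comm v w

variable {ι R : Type*} [Fintype ι] [AddCommGroup ι] [DecidableEq ι] [Semiring R]

theorem circulant_mulVec_single_zero (v : ι → R) : circulant v *ᵥ Pi.single 0 1 = v := by
  ext i
  simp

theorem eq_circulant_of_forall_commute {M : Matrix ι ι R}
    (h : ∀ k : ι, Commute M (circulant (Pi.single k 1))) :
    M = circulant (M *ᵥ Pi.single 0 1) := by
  ext i k
  have hik := congrFun (congrFun (h k).eq i) 0
  simp only [mul_apply, circulant_apply, Pi.single_apply, sub_zero, mul_ite, mul_one, mul_zero,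
    ite_mul, one_mul, zero_mul, Finset.sum_ite_eq', Finset.mem_univ, if_true] at hik
  have hsub : ∀ x, i - x = k ↔ x = i - k := fun x =>
    ⟨fun hx => by rw [← hx]; abel, fun hx => by rw [hx]; abel⟩
  simpa only [hsub, Finset.sum_ite_eq', Finset.mem_univ, if_true, circulant_apply,
    mulVec_single_one, col_apply] using hik

end Matrix

theorem Filter.Tendsto.circulant_mulVec {ι R α : Type*} [Fintype ι] [Sub ι]
    [NonUnitalNonAssocSemiring R] [TopologicalSpace R] [ContinuousAdd R] [ContinuousMul R]
    {l : Filter α} {v w : α → ι → R} {v₀ w₀ : ι → R}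
    (hv : Tendsto v l (nhds v₀)) (hw : Tendsto w l (nhds w₀)) :
    Tendsto (fun a => circulant (v a) *ᵥ w a) l (nhds (circulant v₀ *ᵥ w₀)) := by
  have hcirc : Continuous fun p : (ι → R) × (ι → R) => circulant p.1 :=
    continuous_matrix fun i j => (continuous_apply (i - j)).comp continuous_fst
  have hcont : Continuous fun p : (ι → R) × (ι → R) => circulant p.1 *ᵥ p.2 :=
    hcirc.matrix_mulVec continuous_snd
  exact (hcont.tendsto (v₀, w₀)).comp (f := fun a => (v a, w a)) (hv.prodMk_nhds hw)

section CirculantGraph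

variable (n : ℕ) [NeZero n]

theorem cayAdj_eq_circulant (S : Finset (ZMod n)) :
    cayAdj n S = circulant fun x => if x ∈ S then 1 else 0 :=
  rfl

theorem cayAdj_union {S T : Finset (ZMod n)} (h : Disjoint S T) :
    cayAdj n (S ∪ T) = cayAdj n S + cayAdj n T := by
  ext a b
  by_cases hS : a - b ∈ S
  · simp [cayAdj, hS, Finset.disjoint_left.mp h hS]
  · simp [cayAdj, hS]

theorem transM_union {S T : Finset (ZMod n)} (h : Disjoint S T) (t : ℝ) :
    transM n (S ∪ T) t = transM n S t * transM n T t := by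
  rw [transM, transM, transM, cayAdj_union n h, smul_add, cayAdj_eq_circulant,
    cayAdj_eq_circulant]
  exact Matrix.exp_add_of_commute _ _ (((commute_circulant _ _).smul_left _).smul_right _)

theorem transM_commute_circulant (S : Finset (ZMod n)) (t : ℝ) (v : ZMod n → ℂ) :
    Commute (transM n S t) (circulant v) := by
  rw [transM, cayAdj_eq_circulant]
  exact ((commute_circulant _ v).smul_left _).exp_left

theorem transM_eq_circulant (S : Finset (ZMod n)) (t : ℝ) :
    transM n S t = circulant (transM n S t *ᵥ Pi.single 0 1) :=
  eq_circulant_of_forall_commute fun _ => transM_commute_circulant n S t _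

end CirculantGraph

theorem stmt15_general (n : ℕ) [NeZero n] (S₁ S₂ S₃ : Finset (ZMod n))
    (h12 : Disjoint S₁ S₂) (h13 : Disjoint S₁ S₃) (h23 : Disjoint S₂ S₃)
    (t : ℕ → ℝ) (γ ζ : ℂ)
    (h1 : Tendsto (fun m => (transM n S₁ (t m)).mulVec (Pi.single 0 1 : ZMod n → ℂ))
      atTop (nhds (γ • (Pi.single ((n / 2 : ℕ) : ZMod n) 1 : ZMod n → ℂ))))
    (h2 : Tendsto (fun m => (transM n S₂ (t m)).mulVec (Pi.single 0 1 : ZMod n → ℂ))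
      atTop (nhds (ζ • (Pi.single (0 : ZMod n) 1 : ZMod n → ℂ))))
    (h3 : ∀ m, transM n S₃ (t m) = 1) :
    Tendsto (fun m => (transM n (S₁ ∪ S₂ ∪ S₃) (t m)).mulVec (Pi.single 0 1 : ZMod n → ℂ))
      atTop (nhds ((ζ * γ) • (Pi.single ((n / 2 : ℕ) : ZMod n) 1 : ZMod n → ℂ))) := by
  have hunion : ∀ m, transM n (S₁ ∪ S₂ ∪ S₃) (t m) *ᵥ Pi.single 0 1 =
      circulant (transM n S₁ (t m) *ᵥ Pi.single 0 1) *ᵥ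
        (transM n S₂ (t m) *ᵥ Pi.single 0 1) := by
    intro m
    rw [transM_union n (Finset.disjoint_union_left.2 ⟨h13, h23⟩), transM_union n h12, h3,
      mul_one, ← mulVec_mulVec, ← transM_eq_circulant]
  have hlimit : circulant (γ • Pi.single ((n / 2 : ℕ) : ZMod n) 1) *ᵥ ζ • Pi.single 0 1 =
      (ζ * γ) • (Pi.single ((n / 2 : ℕ) : ZMod n) 1 : ZMod n → ℂ) := by
    rw [mulVec_smul, circulant_mulVec_single_zero, smul_smul]
  simpa only [hunion, hlimit] using h1.circulant_mulVec h2

/-- If, along a common time sequence, H₁(t_m)e₀ → γe_{n/2}, H₂(t_m)e₀ → ζe₀, and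
H₃(t_m) = I, then the transition matrix of the union satisfies
H(t_m)e₀ → ζγ e_{n/2}. -/
theorem stmt15 (n : ℕ) [NeZero n] (heven : 2 ∣ n) (S₁ S₂ S₃ : Finset (ZMod n))
    (h01 : (0 : ZMod n) ∉ S₁) (h02 : (0 : ZMod n) ∉ S₂) (h03 : (0 : ZMod n) ∉ S₃)
    (hsym1 : ∀ s ∈ S₁, -s ∈ S₁) (hsym2 : ∀ s ∈ S₂, -s ∈ S₂) (hsym3 : ∀ s ∈ S₃, -s ∈ S₃)
    (h12 : Disjoint S₁ S₂) (h13 : Disjoint S₁ S₃) (h23 : Disjoint S₂ S₃)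
    (t : ℕ → ℝ) (γ ζ : ℂ) (hγ : ‖γ‖ = 1) (hζ : ‖ζ‖ = 1)
    (h1 : Tendsto (fun m => (transM n S₁ (t m)).mulVec (Pi.single 0 1 : ZMod n → ℂ))
      atTop (nhds (γ • (Pi.single ((n / 2 : ℕ) : ZMod n) 1 : ZMod n → ℂ))))
    (h2 : Tendsto (fun m => (transM n S₂ (t m)).mulVec (Pi.single 0 1 : ZMod n → ℂ))
      atTop (nhds (ζ • (Pi.single (0 : ZMod n) 1 : ZMod n → ℂ))))
    (h3 : ∀ m, transM n S₃ (t m) = 1) :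
    Tendsto (fun m => (transM n (S₁ ∪ S₂ ∪ S₃) (t m)).mulVec (Pi.single 0 1 : ZMod n → ℂ))
      atTop (nhds ((ζ * γ) • (Pi.single ((n / 2 : ℕ) : ZMod n) 1 : ZMod n → ℂ))) :=
  stmt15_general n S₁ S₂ S₃ h12 h13 h23 t γ ζ h1 h2 h3
end
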